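/- arXiv:1909.09843 — 6 statements merged into one kernel-verified Lean document; each statement's English description precedes it below -/
import Mathlib

section
/- If a, b, c are integers satisfying a^2 - (b^2 + 2) * c^2 = 2, then b = 0. -/
/-- Descent lemma: no nonnegative solution with `b ≥ 1` exists, by strong
induction on `a`. The automorph `(b²+1, b)` of the Pell form `x² - (b²+2)y²`
is used to produce a strictly smaller solution. -/
lemma beq0_aux : ∀ n : ℕ, ∀ a b c : ℤ, 0 ≤ a → 1 ≤ b → 0 ≤ c →
    a.toNat = n → a ^ 2 - (b ^ 2 + 2) * c ^ 2 = 2 → False := by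
  intro n
  induction n using Nat.strong_induction_on with
  | _ n ih =>
    intro a b c ha hb hc hn h
    rcases eq_or_lt_of_le hc with hc0 | hc1
    · -- c = 0 : then a² = 2, impossible
      subst hc0
      have h1 : a ≤ 1 := by nlinarith [sq_nonneg (a - 1)]
      nlinarith
    · have hc1 : 1 ≤ c := hc1
      have ha1 : 1 ≤ a := by nlinarith
      -- key inequality : a*b < c*(b²+2)
      have hsq : (a * b) ^ 2 < (c * (b ^ 2 + 2)) ^ 2 := by
        have e : (c * (b ^ 2 + 2)) ^ 2 - (a * b) ^ 2
            = 2 * ((b ^ 2 + 2) * c ^ 2 - b ^ 2) := by linear_combination (-b ^ 2) * h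
        nlinarith [mul_nonneg (by positivity : (0:ℤ) ≤ b ^ 2 + 2)
          (by nlinarith : (0:ℤ) ≤ c ^ 2 - 1)]
      have hkey : a * b < c * (b ^ 2 + 2) :=
        lt_of_pow_lt_pow_left₀ 2 (by positivity) hsq
      -- the descended solution
      set a' : ℤ := a * (b ^ 2 + 1) - c * b * (b ^ 2 + 2) with ha'def
      have h' : a' ^ 2 - (b ^ 2 + 2) * (c * (b ^ 2 + 1) - a * b) ^ 2 = 2 := by
        rw [ha'def]; linear_combination h
      -- a' is positive
      have hsq2 : (c * b * (b ^ 2 + 2)) ^ 2 < (a * (b ^ 2 + 1)) ^ 2 := by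
        have e2 : (a * (b ^ 2 + 1)) ^ 2 - (c * b * (b ^ 2 + 2)) ^ 2
            = 2 * b ^ 2 * (b ^ 2 + 2) + a ^ 2 := by
          linear_combination (b ^ 2 * (b ^ 2 + 2)) * h
        nlinarith
      have ha'pos : 0 < a' := by
        have : c * b * (b ^ 2 + 2) < a * (b ^ 2 + 1) :=
          lt_of_pow_lt_pow_left₀ 2 (by positivity) hsq2
        omega
      -- a' is smaller than a
      have ha'lt : a' < a := by
        have hneg : b * (a * b - c * (b ^ 2 + 2)) < 0 :=
          mul_neg_of_pos_of_neg (by omega) (by omega)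
        have : a' = a + b * (a * b - c * (b ^ 2 + 2)) := by rw [ha'def]; ring
        omega
      -- apply the induction hypothesis
      have h'' : a' ^ 2 - (b ^ 2 + 2) * |c * (b ^ 2 + 1) - a * b| ^ 2 = 2 := by
        rw [sq_abs]; exact h'
      exact ih a'.toNat (by omega) a' b _ (le_of_lt ha'pos) hb (abs_nonneg _) rfl h''

/-- If `a, b, c` are integers satisfying `a^2 - (b^2 + 2) * c^2 = 2`, then `b = 0`. -/
theorem beq0 (a b c : ℤ) (h : a ^ 2 - (b ^ 2 + 2) * c ^ 2 = 2) : b = 0 := by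
  by_contra hb
  have hb1 : 1 ≤ |b| := Int.one_le_abs (by omega)
  have h' : |a| ^ 2 - (|b| ^ 2 + 2) * |c| ^ 2 = 2 := by
    rw [sq_abs, sq_abs, sq_abs]; exact h
  exact beq0_aux |a|.toNat |a| |b| |c| (abs_nonneg a) hb1 (abs_nonneg c) rfl h'
end

section
/- If a, b, c, m are integers with a^2 - 2 * m^2 * c^2 = 2 and b^2 + 2 = 2 * m^2, then b = 0 and m^2 = 1. -/
/-- Descent lemma: if `B > 0`, the equation `X^2 - 2*(2B^2+1)*Z^2 = -1` has no
solution with `Z > 0`. -/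
private lemma pell_key (B : ℤ) (hB : 0 < B) :
    ∀ n : ℕ, ∀ Z X : ℤ, 0 < Z → 0 < X → Z ≤ (n : ℤ) →
      X ^ 2 - 2 * (2 * B ^ 2 + 1) * Z ^ 2 = -1 → False := by
  intro n
  induction n with
  | zero =>
    intro Z X hZ _ hZn _
    omega
  | succ n ih =>
    intro Z X hZ hX hZn heq
    set Z' : ℤ := (2 * (2 * B ^ 2 + 1) - 1) * Z - 2 * X * B with hZ'def
    set Z'' : ℤ := (2 * (2 * B ^ 2 + 1) - 1) * Z + 2 * X * B with hZ''def
    have hprod : Z' * Z'' = Z ^ 2 + 4 * B ^ 2 := by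
      rw [hZ'def, hZ''def]
      linear_combination (-4 * B ^ 2) * heq
    have hZ''pos : 0 < Z'' := by
      rw [hZ''def]
      nlinarith [mul_pos hX hB, mul_pos hB hZ, sq_nonneg B]
    have hZ'pos : 0 < Z' := by
      by_contra h
      push_neg at h
      nlinarith [mul_pos hB hB]
    by_cases hlt : Z' < Z
    · -- descend
      set X' : ℤ := (2 * (2 * B ^ 2 + 1) - 1) * X - 4 * (2 * B ^ 2 + 1) * Z * B with hX'def
      have hnorm : X' ^ 2 - 2 * (2 * B ^ 2 + 1) * Z' ^ 2 = -1 := by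
        rw [hX'def, hZ'def]
        linear_combination heq
      have hX'ne : X' ≠ 0 := by
        intro h
        rw [h] at hnorm
        nlinarith [mul_pos hZ'pos hZ'pos, sq_nonneg B]
      have hXabs : |X'| ^ 2 - 2 * (2 * B ^ 2 + 1) * Z' ^ 2 = -1 := by
        rw [sq_abs]; exact hnorm
      have : Z' ≤ (n : ℤ) := by
        push_cast at hZn; omega
      exact ih Z' |X'| hZ'pos (abs_pos.mpr hX'ne) this hXabs
    · -- minimal case: contradiction
      push_neg at hlt
      have h1 : Z * Z'' ≤ Z' * Z'' := by
        exact mul_le_mul_of_nonneg_right hlt (le_of_lt hZ''pos)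
      rw [hprod, hZ''def] at h1
      have hZZ : (1 : ℤ) ≤ Z * Z := by nlinarith
      have hBZ : B * B * 1 ≤ B * B * (Z * Z) :=
        mul_le_mul_of_nonneg_left hZZ (mul_nonneg hB.le hB.le)
      nlinarith [mul_pos hX (mul_pos hB hZ), mul_pos hB hB]

/-- If `a, b, c, m` are integers with `a^2 - 2m^2c^2 = 2` and `b^2 + 2 = 2m^2`, then
`b = 0` and `m^2 = 1`. -/
theorem pell_system (a b c m : ℤ) (h1 : a ^ 2 - 2 * m ^ 2 * c ^ 2 = 2)
    (h2 : b ^ 2 + 2 = 2 * m ^ 2) : b = 0 ∧ m ^ 2 = 1 := by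
  -- a and b are even
  have hae : Even a := by
    have : Even (a ^ 2) := ⟨1 + m ^ 2 * c ^ 2, by linarith⟩
    exact (Int.even_pow.mp this).1
  have hbe : Even b := by
    have : Even (b ^ 2) := ⟨m ^ 2 - 1, by linarith⟩
    exact (Int.even_pow.mp this).1
  obtain ⟨A, hA⟩ := hae
  obtain ⟨B0, hB0⟩ := hbe
  -- reduce the equations
  have e1 : 2 * A ^ 2 - m ^ 2 * c ^ 2 = 1 := by
    have := h1; rw [hA] at this; nlinarith
  have e2 : m ^ 2 - 2 * B0 ^ 2 = 1 := by
    have := h2; rw [hB0] at this; nlinarith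
  have hb : b = 0 := by
    by_contra hb
    have hB0ne : B0 ≠ 0 := by
      intro h; apply hb; rw [hB0, h]; ring
    set X0 : ℤ := m ^ 2 * c + 2 * A * B0 with hX0def
    set Z0 : ℤ := A + c * B0 with hZ0def
    have hnorm0 : X0 ^ 2 - 2 * m ^ 2 * Z0 ^ 2 = -1 := by
      rw [hX0def, hZ0def]
      linear_combination (-(m ^ 2 - 2 * B0 ^ 2)) * e1 - e2
    have hZ0ne : Z0 ≠ 0 := by
      intro h
      rw [h] at hnorm0
      nlinarith [sq_nonneg X0]
    have hX0ne : X0 ≠ 0 := by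
      intro h
      rw [h] at hnorm0
      have hZ0sqpos : (0 : ℤ) < Z0 ^ 2 := by positivity
      have hZ0sq : (1 : ℤ) ≤ Z0 ^ 2 := hZ0sqpos
      have hm2pos : (0 : ℤ) ≤ m ^ 2 := sq_nonneg m
      have hmul : m ^ 2 * 1 ≤ m ^ 2 * Z0 ^ 2 := mul_le_mul_of_nonneg_left hZ0sq hm2pos
      nlinarith [sq_nonneg B0]
    have key := pell_key |B0| (abs_pos.mpr hB0ne) Z0.natAbs |Z0| |X0|
      (abs_pos.mpr hZ0ne) (abs_pos.mpr hX0ne) (le_of_eq (Int.abs_eq_natAbs Z0))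
    apply key
    rw [sq_abs, sq_abs, sq_abs]
    have hm2 : m ^ 2 = 2 * B0 ^ 2 + 1 := by linarith
    rw [← hm2]
    exact hnorm0
  refine ⟨hb, ?_⟩
  rw [hb] at h2
  nlinarith
end

section
/- Let a and c be integers with a ≥ 0 and c ≤ -1. Then a^2 - 2*c^2 = 2 holds if and only if there exists an integer i ≥ 1 such that, as real numbers, a = ((1 + √2)^(2i-1) - (1 - √2)^(2i-1))/√2 and c = -((1 + √2)^(2i-1) + (1 - √2)^(2i-1))/2. -/
private def S : ℕ → ℤ × ℤ
  | 0 => (2, 1)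
  | n+1 => (3 * (S n).1 + 4 * (S n).2, 2 * (S n).1 + 3 * (S n).2)

private lemma S_pell (n : ℕ) : (S n).1 ^ 2 - 2 * (S n).2 ^ 2 = 2 := by
  induction n with
  | zero => decide
  | succ n ih => simp only [S]; linear_combination ih

private lemma S_pos (n : ℕ) : 2 ≤ (S n).1 ∧ 1 ≤ (S n).2 := by
  induction n with
  | zero => decide
  | succ n ih => simp only [S]; constructor <;> linarith [ih.1, ih.2]

private lemma S_closed (n : ℕ) :
    ((S n).1 : ℝ) * Real.sqrt 2 =
      (1 + Real.sqrt 2) ^ (2 * n + 1) - (1 - Real.sqrt 2) ^ (2 * n + 1) ∧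
    ((S n).2 : ℝ) * 2 =
      (1 + Real.sqrt 2) ^ (2 * n + 1) + (1 - Real.sqrt 2) ^ (2 * n + 1) := by
  have hs : Real.sqrt 2 ^ 2 = 2 := Real.sq_sqrt (by norm_num)
  induction n with
  | zero =>
    constructor
    · show ((2:ℤ) : ℝ) * Real.sqrt 2 = _ ^ 1 - _ ^ 1
      push_cast; ring
    · show ((1:ℤ) : ℝ) * 2 = _ ^ 1 + _ ^ 1
      push_cast; ring
  | succ n ih =>
    obtain ⟨h1, h2⟩ := ih
    have e : 2 * (n + 1) + 1 = (2 * n + 1) + 2 := by ring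
    have hpa : ∀ x : ℝ, x ^ (2 * n + 1 + 2) = x ^ (2 * n + 1) * x ^ 2 :=
      fun x => pow_add x (2 * n + 1) 2
    rw [e, hpa, hpa]
    obtain ⟨P, hP⟩ : ∃ P, (1 + Real.sqrt 2) ^ (2 * n + 1) = P := ⟨_, rfl⟩
    obtain ⟨Q, hQ⟩ : ∃ Q, (1 - Real.sqrt 2) ^ (2 * n + 1) = Q := ⟨_, rfl⟩
    rw [hP, hQ] at h1 h2 ⊢
    constructor
    · simp only [S]
      push_cast
      linear_combination 3 * h1 + 2 * Real.sqrt 2 * h2 - (P - Q) * hs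
    · simp only [S]
      push_cast
      linear_combination 2 * Real.sqrt 2 * h1 + 3 * h2 + (-(P + Q) - 2 * (((S n).1 : ℤ) : ℝ)) * hs

private lemma descent : ∀ N : ℕ, ∀ x y : ℤ, x.toNat ≤ N → 0 ≤ x → 1 ≤ y →
    x ^ 2 - 2 * y ^ 2 = 2 → ∃ n, x = (S n).1 ∧ y = (S n).2 := by
  intro N
  induction N with
  | zero =>
    intro x y hN hx hy h
    have : x = 0 := by omega
    subst this; nlinarith
  | succ N ih =>
    intro x y hN hx hy h
    have hx2 : 2 ≤ x := by nlinarith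
    rcases eq_or_lt_of_le hy with hy1 | hy2
    · have : x = 2 := by nlinarith
      exact ⟨0, by simp [S, this, ← hy1]⟩
    · have hy2 : 2 ≤ y := hy2
      -- no solutions with 2 ≤ y ≤ 6
      have hy7 : 7 ≤ y := by
        by_contra hlt
        push_neg at hlt
        have hxle : x ≤ 8 := by nlinarith
        rw [sq, sq] at h
        interval_cases y <;> interval_cases x <;> omega
      set x' := 3 * x - 4 * y with hx'
      set y' := 3 * y - 2 * x with hy'
      have hx'pos : 0 ≤ x' := by nlinarith
      have hy'pos : 1 ≤ y' := by nlinarith [sq_nonneg (3*y - 1 - 2*x)]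
      have hlt : x' < x := by nlinarith
      have hp : x' ^ 2 - 2 * y' ^ 2 = 2 := by rw [hx', hy']; linear_combination h
      obtain ⟨n, h1, h2⟩ := ih x' y' (by omega) hx'pos hy'pos hp
      refine ⟨n + 1, ?_, ?_⟩ <;> simp only [S, ← h1, ← h2] <;> omega

/-- For integers `a ≥ 0` and `c ≤ -1`, the equation `a^2 - 2c^2 = 2` holds if and only
if there is an integer `i ≥ 1` with `a = ((1+√2)^(2i-1) - (1-√2)^(2i-1))/√2` and
`c = -((1+√2)^(2i-1) + (1-√2)^(2i-1))/2` (as real numbers). -/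
theorem div4_solutions (a c : ℤ) (ha : 0 ≤ a) (hc : c ≤ -1) :
    a ^ 2 - 2 * c ^ 2 = 2 ↔
      ∃ i : ℕ, 1 ≤ i ∧
        (a : ℝ) = ((1 + Real.sqrt 2) ^ (2 * i - 1) - (1 - Real.sqrt 2) ^ (2 * i - 1)) /
            Real.sqrt 2 ∧
        (c : ℝ) = -(((1 + Real.sqrt 2) ^ (2 * i - 1) + (1 - Real.sqrt 2) ^ (2 * i - 1)) / 2) := by
  have hs0 : Real.sqrt 2 ≠ 0 := by positivity
  constructor
  · intro h
    obtain ⟨n, h1, h2⟩ := descent (a.toNat) a (-c) le_rfl ha (by omega)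
      (by linear_combination h)
    refine ⟨n + 1, le_add_self, ?_, ?_⟩
    · have e : 2 * (n + 1) - 1 = 2 * n + 1 := by omega
      rw [e, eq_div_iff hs0, ← (S_closed n).1, ← h1]
    · have e : 2 * (n + 1) - 1 = 2 * n + 1 := by omega
      have := (S_closed n).2
      rw [← h2] at this
      push_cast at this ⊢
      rw [e]
      linarith
  · rintro ⟨i, hi, h1, h2⟩
    obtain ⟨n, rfl⟩ : ∃ n, i = n + 1 := ⟨i - 1, by omega⟩
    have e : 2 * (n + 1) - 1 = 2 * n + 1 := by omega
    rw [e] at h1 h2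
    have ha' : a = (S n).1 := by
      have := (S_closed n).1
      rw [eq_div_iff hs0] at h1
      exact_mod_cast (mul_right_cancel₀ hs0 (by rw [h1, this] : (a:ℝ) * Real.sqrt 2 = ((S n).1 : ℝ) * Real.sqrt 2))
    have hc' : c = -(S n).2 := by
      have h2' := (S_closed n).2
      have : (c : ℝ) = -((S n).2 : ℝ) := by
        rw [h2]; rw [← h2']; ring
      exact_mod_cast this
    rw [ha', hc']
    linear_combination S_pell n
end

section
/- Positive integers a and y satisfy a^2 - 2*y^2 = 2 if and only if there exists an odd positive integer k such that, as real numbers, a = ((2 + √2)^k + (2 - √2)^k)/(2 * √(2^(k-1))) and y = ((2 + √2)^k - (2 - √2)^k)/(2 * √(2^k)). -/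
/-!
The solutions are the elements `a + y√2` of `ℤ[√2]` of norm `2`. Since `a` is even, such an
element is `(2 + √2) w` with `w` of norm `1`, and positivity of `a, y` makes both coordinates of `w`
nonnegative, so by Pell theory `w` is a power of the fundamental unit `3 + 2√2 = (2 + √2)² / 2`.
Hence `2ⁿ (a + y√2) = (2 + √2)²ⁿ⁺¹`, and the displayed formulas read `a` and `y` off this
identity and its Galois conjugate.
-/

open Real

def normTwoSolution (n : ℕ) : ℤ√2 := ⟨2, 1⟩ * ⟨3, 2⟩ ^ n

theorem norm_normTwoSolution (n : ℕ) : (normTwoSolution n).norm = 2 := by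
  induction n with
  | zero => rfl
  | succ n ih =>
    rw [normTwoSolution, pow_succ, ← mul_assoc, Zsqrtd.norm_mul, ← normTwoSolution, ih]
    rfl

theorem isFundamental_mk_three_two :
    Pell.IsFundamental (Pell.Solution₁.mk (d := 2) 3 2 (by norm_num)) := by
  refine ⟨by simp, by simp, fun {b} hb => ?_⟩
  rw [Pell.Solution₁.x_mk]
  by_contra! hb'
  have hx : b.x = 2 := by omega
  have hpell := b.prop
  rw [hx] at hpell
  omega

theorem exists_eq_normTwoSolution {a y : ℤ} (ha : 0 < a) (hy : 0 < y)
    (h : a ^ 2 - 2 * y ^ 2 = 2) : ∃ n : ℕ, (⟨a, y⟩ : ℤ√2) = normTwoSolution n := by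
  obtain ⟨b, rfl⟩ : Even a :=
    (Int.even_pow' two_ne_zero).mp ⟨y ^ 2 + 1, by linear_combination h⟩
  let w : Pell.Solution₁ 2 := .mk (2 * b - y) (y - b) (by linarith)
  obtain ⟨n, hn⟩ := isFundamental_mk_three_two.eq_pow_of_nonneg (a := w)
    (show 0 < 2 * b - y by nlinarith) (show 0 ≤ y - b by nlinarith)
  have hw : (w : ℤ√2) = ⟨3, 2⟩ ^ n := by
    rw [hn]
    exact map_pow (unitary (ℤ√2)).subtype _ n
  refine ⟨n, ?_⟩
  rw [normTwoSolution, ← hw]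
  ext <;> simp only [w, Pell.Solution₁.coe_mk, Zsqrtd.re_mul, Zsqrtd.im_mul] <;> ring

theorem two_add_pow_two_mul_add_one {r : ℝ} (hr : r * r = 2) (n : ℕ) :
    (2 + r) ^ (2 * n + 1) =
      2 ^ n * ((normTwoSolution n).re + (normTwoSolution n).im * r) := by
  have hsq : (2 + r) ^ 2 = 2 * (3 + 2 * r) := by linear_combination hr
  let φ : ℤ√2 →+* ℝ := Zsqrtd.lift ⟨r, by exact_mod_cast hr⟩
  calc (2 + r) ^ (2 * n + 1) = 2 ^ n * ((2 + r) * (3 + 2 * r) ^ n) := by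
        rw [pow_succ, pow_mul, hsq, mul_pow]; ring
    _ = 2 ^ n * φ (normTwoSolution n) := by rw [normTwoSolution, map_mul, map_pow]; simp [φ]
    _ = _ := by simp [φ]

theorem sqrt_pow_two_mul {x : ℝ} (hx : 0 ≤ x) (n : ℕ) : √(x ^ (2 * n)) = x ^ n := by
  rw [pow_mul', sqrt_sq (by positivity)]

theorem sqrt_pow_two_mul_add_one {x : ℝ} (hx : 0 ≤ x) (n : ℕ) :
    √(x ^ (2 * n + 1)) = x ^ n * √x := by
  rw [pow_succ, sqrt_mul (by positivity), sqrt_pow_two_mul hx]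

theorem re_normTwoSolution (n : ℕ) :
    ((normTwoSolution n).re : ℝ) = ((2 + √2) ^ (2 * n + 1) + (2 - √2) ^ (2 * n + 1)) /
      (2 * √(2 ^ (2 * n + 1 - 1))) := by
  rw [sub_eq_add_neg, two_add_pow_two_mul_add_one (mul_self_sqrt zero_le_two),
    two_add_pow_two_mul_add_one (by rw [neg_mul_neg, mul_self_sqrt zero_le_two]),
    Nat.add_sub_cancel, sqrt_pow_two_mul zero_le_two]
  field_simp
  ring

theorem im_normTwoSolution (n : ℕ) :
    ((normTwoSolution n).im : ℝ) = ((2 + √2) ^ (2 * n + 1) - (2 - √2) ^ (2 * n + 1)) /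
      (2 * √(2 ^ (2 * n + 1))) := by
  rw [sub_eq_add_neg 2, two_add_pow_two_mul_add_one (mul_self_sqrt zero_le_two),
    two_add_pow_two_mul_add_one (by rw [neg_mul_neg, mul_self_sqrt zero_le_two]),
    sqrt_pow_two_mul_add_one zero_le_two]
  field_simp
  ring

/-- Positive integers `a`, `y` satisfy `a^2 - 2y^2 = 2` if and only if there is an odd
positive integer `k` with `a = ((2+√2)^k + (2-√2)^k)/(2√(2^(k-1)))` and
`y = ((2+√2)^k - (2-√2)^k)/(2√(2^k))` (as real numbers). -/
theorem mahler_solutions (a y : ℤ) (ha : 0 < a) (hy : 0 < y) :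
    a ^ 2 - 2 * y ^ 2 = 2 ↔
      ∃ k : ℕ, Odd k ∧ 0 < k ∧
        (a : ℝ) = ((2 + Real.sqrt 2) ^ k + (2 - Real.sqrt 2) ^ k) /
            (2 * Real.sqrt (2 ^ (k - 1))) ∧
        (y : ℝ) = ((2 + Real.sqrt 2) ^ k - (2 - Real.sqrt 2) ^ k) /
            (2 * Real.sqrt (2 ^ k)) := by
  constructor
  · intro h
    obtain ⟨n, hn⟩ := exists_eq_normTwoSolution ha hy h
    refine ⟨2 * n + 1, odd_two_mul_add_one n, by omega, ?_, ?_⟩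
    · rw [← re_normTwoSolution, ← hn]
    · rw [← im_normTwoSolution, ← hn]
  · rintro ⟨_, ⟨n, rfl⟩, -, hre, him⟩
    have hz : (⟨a, y⟩ : ℤ√2) = normTwoSolution n := by
      ext
      · exact_mod_cast hre.trans (re_normTwoSolution n).symm
      · exact_mod_cast him.trans (im_normTwoSolution n).symm
    have hnorm := norm_normTwoSolution n
    rw [← hz, Zsqrtd.norm_def] at hnorm
    linear_combination hnorm
end

section
/- Let m and n be nonnegative integers, and set φ_m = (m + √(m^2 + 4))/2 and φ_n = (n + √(n^2 + 4))/2 (the positive real roots of x^2 - mx - 1 = 0 and x^2 - nx - 1 = 0 respectively). Suppose x and y are real numbers with |x| ≤ 1 and |y| ≤ 1 such that m*(φ_m^2*φ_n^2 + φ_m^2) + 2*φ_m*x + 2*φ_m*φ_n^2*y ≤ 1 + φ_m^2*φ_n^2 + φ_m^2 + φ_n^2. Then m ≤ 2. -/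
/-- The Frobenius–Schur indicator bound: if `φ_m`, `φ_n` are the positive roots of
`x^2 - mx - 1 = 0`, `x^2 - nx - 1 = 0` (for naturals `m`, `n`), and `x`, `y` are real
numbers with `|x| ≤ 1`, `|y| ≤ 1` such that
`m (φ_m² φ_n² + φ_m²) + 2 φ_m x + 2 φ_m φ_n² y ≤ 1 + φ_m² φ_n² + φ_m² + φ_n²`,
then `m ≤ 2`. -/
theorem fs_bound (m n : ℕ) (φm φn : ℝ)
    (hφm : φm = ((m : ℝ) + Real.sqrt ((m : ℝ) ^ 2 + 4)) / 2)
    (hφn : φn = ((n : ℝ) + Real.sqrt ((n : ℝ) ^ 2 + 4)) / 2)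
    (x y : ℝ) (hx : |x| ≤ 1) (hy : |y| ≤ 1)
    (h : (m : ℝ) * (φm ^ 2 * φn ^ 2 + φm ^ 2) + 2 * φm * x + 2 * φm * φn ^ 2 * y ≤
      1 + φm ^ 2 * φn ^ 2 + φm ^ 2 + φn ^ 2) :
    m ≤ 2 := by
  by_contra hm
  push_neg at hm
  have hm3 : (3 : ℝ) ≤ (m : ℝ) := by exact_mod_cast hm
  have hsm : Real.sqrt ((m : ℝ) ^ 2 + 4) ^ 2 = (m : ℝ) ^ 2 + 4 :=
    Real.sq_sqrt (by positivity)
  have hsn : Real.sqrt ((n : ℝ) ^ 2 + 4) ^ 2 = (n : ℝ) ^ 2 + 4 :=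
    Real.sq_sqrt (by positivity)
  have hm2 : φm ^ 2 = (m : ℝ) * φm + 1 := by rw [hφm]; field_simp; nlinarith [hsm]
  have hn2 : φn ^ 2 = (n : ℝ) * φn + 1 := by rw [hφn]; field_simp; nlinarith [hsn]
  have hmge : (m : ℝ) ≤ φm := by
    have h1 : (m : ℝ) ≤ Real.sqrt ((m : ℝ) ^ 2 + 4) := by
      have := Real.sqrt_le_sqrt (show (m : ℝ) ^ 2 ≤ (m : ℝ) ^ 2 + 4 by linarith)
      rwa [Real.sqrt_sq (by positivity)] at this
    rw [hφm]; linarith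
  have hnge : (1 : ℝ) ≤ φn := by
    have h1 : (2 : ℝ) ≤ Real.sqrt ((n : ℝ) ^ 2 + 4) := by
      have := Real.sqrt_le_sqrt (show (4 : ℝ) ≤ (n : ℝ) ^ 2 + 4 by nlinarith [sq_nonneg ((n:ℝ))])
      rwa [show Real.sqrt 4 = 2 by
        rw [show (4 : ℝ) = 2 ^ 2 by norm_num, Real.sqrt_sq (by norm_num)]] at this
    have hn0 : (0 : ℝ) ≤ (n : ℝ) := Nat.cast_nonneg n
    rw [hφn]; linarith
  have hx' : -1 ≤ x := (abs_le.mp hx).1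
  have hy' : -1 ≤ y := (abs_le.mp hy).1
  have hφm3 : (3 : ℝ) ≤ φm := le_trans hm3 hmge
  nlinarith [sq_nonneg φn, mul_pos (show (0:ℝ) < φm by linarith) (show (0:ℝ) < φn by linarith),
    mul_le_mul_of_nonneg_left hx' (show (0:ℝ) ≤ 2 * φm by linarith),
    mul_le_mul_of_nonneg_left hy' (show (0:ℝ) ≤ 2 * φm * φn ^ 2 by nlinarith),
    mul_nonneg (mul_nonneg (show (0:ℝ) ≤ φn^2+1 by positivity)
      (show (0:ℝ) ≤ φm by linarith)) (show (0:ℝ) ≤ φm - 3 by linarith),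
    sq_nonneg (φm - 3), sq_nonneg (φm*φn)]
end

section
/- Define real sequences m_n = ((3 + 2√2)^n + (3 - 2√2)^n)/2 and y_n = ((4 + 2√2)^(2n+1) - (4 - 2√2)^(2n+1))/(2^(3n+2) * √2) for n ∈ ℕ. Then the sequence n ↦ y_n/m_n is strictly monotonically increasing and converges to 1 + √2 as n → ∞. -/
open Filter Topology

/-- With `m_n = ((3+2√2)^n + (3-2√2)^n)/2` and
`y_n = ((4+2√2)^(2n+1) - (4-2√2)^(2n+1))/(2^(3n+2) √2)`, the sequence `y_n / m_n` is
strictly increasing and converges to `1 + √2`. -/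
theorem ratio_mono_tendsto :
    StrictMono (fun n : ℕ =>
      (((4 + 2 * Real.sqrt 2) ^ (2 * n + 1) - (4 - 2 * Real.sqrt 2) ^ (2 * n + 1)) /
          (2 ^ (3 * n + 2) * Real.sqrt 2)) /
        (((3 + 2 * Real.sqrt 2) ^ n + (3 - 2 * Real.sqrt 2) ^ n) / 2)) ∧
    Tendsto (fun n : ℕ =>
      (((4 + 2 * Real.sqrt 2) ^ (2 * n + 1) - (4 - 2 * Real.sqrt 2) ^ (2 * n + 1)) /
          (2 ^ (3 * n + 2) * Real.sqrt 2)) /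
        (((3 + 2 * Real.sqrt 2) ^ n + (3 - 2 * Real.sqrt 2) ^ n) / 2))
      atTop (𝓝 (1 + Real.sqrt 2)) := by
  set s := Real.sqrt 2 with hs_def
  have hs2 : s ^ 2 = 2 := Real.sq_sqrt (by norm_num)
  have hs0 : (0:ℝ) < s := Real.sqrt_pos.mpr (by norm_num)
  have hs1 : 1 < s := by nlinarith
  have hslt : s < 3/2 := by nlinarith
  have hb0 : (0:ℝ) < 3 - 2*s := by linarith
  have hb1 : 3 - 2*s < 1 := by linarith
  have key : ∀ n : ℕ,
      (((4 + 2 * s) ^ (2 * n + 1) - (4 - 2 * s) ^ (2 * n + 1)) /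
          (2 ^ (3 * n + 2) * s)) /
        (((3 + 2 * s) ^ n + (3 - 2 * s) ^ n) / 2)
      = ((4 + 2*s) - (4 - 2*s) * ((3 - 2*s)^n)^2) / (2 * s * (1 + ((3 - 2*s)^n)^2)) := by
    intro n
    have hA : (0:ℝ) < (3 + 2*s)^n := by positivity
    have hB : (0:ℝ) < (3 - 2*s)^n := by positivity
    have hAB : (3 + 2*s)^n * (3 - 2*s)^n = 1 := by
      rw [← mul_pow, show (3 + 2*s) * (3 - 2*s) = 1 by nlinarith]; simp
    have h1 : (4 + 2*s) ^ (2*n + 1) = 8^n * ((3 + 2*s)^n * (4 + 2*s)) := by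
      rw [pow_succ, pow_mul, show (4 + 2*s)^2 = 8*(3 + 2*s) by nlinarith, mul_pow]; ring
    have h2 : (4 - 2*s) ^ (2*n + 1) = 8^n * ((3 - 2*s)^n * (4 - 2*s)) := by
      rw [pow_succ, pow_mul, show (4 - 2*s)^2 = 8*(3 - 2*s) by nlinarith, mul_pow]; ring
    have h3 : (2:ℝ) ^ (3*n + 2) = 8^n * 4 := by
      rw [pow_add, pow_mul]; norm_num
    rw [h1, h2, h3]
    have h8 : (0:ℝ) < (8:ℝ)^n := by positivity
    have e1 : (8^n * ((3 + 2*s)^n * (4 + 2*s)) - 8^n * ((3 - 2*s)^n * (4 - 2*s))) /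
          (8^n * 4 * s) / (((3 + 2*s)^n + (3 - 2*s)^n) / 2)
        = ((4 + 2*s) * (3 + 2*s)^n - (4 - 2*s) * (3 - 2*s)^n) /
          (2 * s * ((3 + 2*s)^n + (3 - 2*s)^n)) := by
      have hd : (3 + 2*s)^n + (3 - 2*s)^n ≠ 0 := by positivity
      field_simp
      ring
    rw [e1, div_eq_div_iff (by positivity) (by positivity)]
    linear_combination (16 * s * (3 - 2*s)^n) * hAB
  constructor
  · intro m n hmn
    simp only [key]
    have hpow : (3 - 2*s)^n < (3 - 2*s)^m :=
      pow_lt_pow_right_of_lt_one₀ hb0 hb1 hmn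
    have hBm : (0:ℝ) < (3 - 2*s)^m := by positivity
    have hBn : (0:ℝ) < (3 - 2*s)^n := by positivity
    have hsq : ((3 - 2*s)^n)^2 < ((3 - 2*s)^m)^2 := by nlinarith
    rw [div_lt_div_iff₀ (by positivity) (by positivity)]
    nlinarith [mul_pos hs0 (sub_pos.mpr hsq)]
  · have ht : Tendsto (fun n : ℕ => ((3 - 2*s)^2)^n) atTop (𝓝 0) :=
      tendsto_pow_atTop_nhds_zero_of_lt_one (by positivity) (by nlinarith)
    have heq : ∀ n : ℕ, ((3 - 2*s)^n)^2 = ((3 - 2*s)^2)^n := fun n => pow_right_comm _ _ _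
    have hmain : Tendsto (fun n : ℕ =>
        ((4 + 2*s) - (4 - 2*s) * ((3 - 2*s)^2)^n) / (2 * s * (1 + ((3 - 2*s)^2)^n)))
        atTop (𝓝 (((4 + 2*s) - (4 - 2*s) * 0) / (2 * s * (1 + 0)))) := by
      apply Tendsto.div
      · exact tendsto_const_nhds.sub (tendsto_const_nhds.mul ht)
      · exact tendsto_const_nhds.mul (tendsto_const_nhds.add ht)
      · positivity
    have hval : ((4 + 2*s) - (4 - 2*s) * 0) / (2 * s * (1 + 0)) = 1 + s := by
      field_simp
      nlinarith
    rw [hval] at hmain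
    convert hmain using 2 with n
    rw [key n, heq n]
end
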